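/- arXiv:1010.6298 — 3 statements merged into one kernel-verified Lean document; each statement's English description precedes it below -/
import Mathlib

section
/- For every integer d ≥ 2 and every integer k with d-1 ≤ k ≤ d(d-1)/2, there exists a configuration realizing exactly k, i.e. there exist points z₁,...,z_d in the complex plane with strictly increasing real parts and pairwise distinct imaginary parts, together with for each j = 2,...,d-1 a vertical ray (a cut) emanating from z_j going either up or down, such that the number of pairs (i,j), i < j, for which the open straight segment from z_i to z_j meets none of the cuts, is exactly k. -/
/-!
Put the nodes at `x = 0, 1, …, d - 1` and let every cut point upwards. Then `(i, j)` is visible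
exactly when no node strictly between them lies strictly below the chord from `z i` to `z j`, so
the count only depends on the heights. Write `k = C(m, 2) + c + (d - 1 - m)` with
`1 ≤ c ≤ m < d`. The first `m` nodes lie on the concave parabola `y = -x²` and see each other;
node `m` is placed so that it sees exactly `c` of them; the remaining nodes climb a convex parabola
steeply enough that each sees only its predecessor.
-/

open Complex Set

/-- The vertical ray (cut) at point `p`, going up if `b = true`, down otherwise. -/
def cutRay (p : ℂ) (b : Bool) : Set ℂ :=
  {w : ℂ | ∃ t : ℝ, 0 < t ∧ w = p + Complex.I * (if b then (t : ℂ) else -(t : ℂ))}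

/-- The union of the cuts of a chopped vertical strip: one vertical ray at each
interior node `z j`, `j = 2, ..., d-1` (in `Fin d` indexing: `0 < j < d - 1`). -/
def cutSet (d : ℕ) (z : Fin d → ℂ) (dir : Fin d → Bool) : Set ℂ :=
  ⋃ j ∈ {j : Fin d | (j : ℕ) ≠ 0 ∧ (j : ℕ) ≠ d - 1}, cutRay (z j) (dir j)

/-- The pair `(i, j)` is visible if the open segment from `z i` to `z j`
meets none of the cuts. -/
def Visible (d : ℕ) (z : Fin d → ℂ) (dir : Fin d → Bool) (i j : Fin d) : Prop :=
  openSegment ℝ (z i) (z j) ∩ cutSet d z dir = ∅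

/-- The number of visible pairs `(i, j)`, `i < j`, of a chopped vertical strip. -/
noncomputable def visibleCount (d : ℕ) (z : Fin d → ℂ) (dir : Fin d → Bool) : ℕ :=
  Nat.card {p : Fin d × Fin d // p.1 < p.2 ∧ Visible d z dir p.1 p.2}

open scoped Finset

theorem cutRay_true (p : ℂ) : cutRay p true = {w | w.re = p.re ∧ p.im < w.im} := by
  ext w
  constructor
  · rintro ⟨t, ht, rfl⟩
    simpa using ht
  · rintro ⟨hre, him⟩
    exact ⟨w.im - p.im, sub_pos.2 him, Complex.ext (by simp [hre]) (by simp)⟩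

theorem re_mem_Ioo_of_mem_openSegment {a b w : ℂ} (hab : a.re < b.re)
    (hw : w ∈ openSegment ℝ a b) : w.re ∈ Ioo a.re b.re := by
  rw [← openSegment_eq_Ioo hab]
  exact image_openSegment ℝ Complex.reLm.toAffineMap a b ▸ mem_image_of_mem _ hw

theorem openSegment_inter_cutRay_true_nonempty_iff {a b p : ℂ} (hap : a.re < p.re)
    (hpb : p.re < b.re) :
    (openSegment ℝ a b ∩ cutRay p true).Nonempty ↔
      p.im * (b.re - a.re) < a.im * (b.re - p.re) + b.im * (p.re - a.re) := by
  have hab : 0 < b.re - a.re := by linarith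
  have height {t : ℝ} (ht : a.re + t * (b.re - a.re) = p.re) :
      (a.im + t * (b.im - a.im)) * (b.re - a.re) =
        a.im * (b.re - p.re) + b.im * (p.re - a.re) := by
    linear_combination (b.im - a.im) * ht
  simp only [openSegment_eq_image', cutRay_true, Set.Nonempty, mem_inter_iff, mem_image,
    mem_ofPred_eq]
  constructor
  · rintro ⟨_, ⟨t, -, rfl⟩, hre, him⟩
    simp only [real_smul, add_re, mul_re, ofReal_re, sub_re, ofReal_im, sub_im, zero_mul,
      sub_zero, add_im, mul_im, add_zero] at hre him
    rw [← height hre]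
    exact mul_lt_mul_of_pos_right him hab
  · intro h
    set t := (p.re - a.re) / (b.re - a.re)
    have ht : a.re + t * (b.re - a.re) = p.re := by
      rw [div_mul_cancel₀ _ hab.ne']; ring
    have ht01 : t ∈ Ioo 0 1 := ⟨div_pos (by linarith) hab, (div_lt_one hab).2 (by linarith)⟩
    refine ⟨_, ⟨t, ht01, rfl⟩, ?_, ?_⟩
    · simpa using ht
    · rw [← height ht] at h
      simpa using lt_of_mul_lt_mul_right h hab.le

theorem openSegment_inter_cutRay_true_nonempty_iff_of_strictMono {d : ℕ} {z : Fin d → ℂ}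
    (hz : StrictMono fun i => (z i).re) {i j q : Fin d} (hij : i < j) :
    (openSegment ℝ (z i) (z j) ∩ cutRay (z q) true).Nonempty ↔ i < q ∧ q < j ∧
      (z q).im * ((z j).re - (z i).re) <
        (z i).im * ((z j).re - (z q).re) + (z j).im * ((z q).re - (z i).re) := by
  constructor
  · intro h
    have ⟨w, hw, hwq⟩ := h
    rw [cutRay_true] at hwq
    obtain ⟨hiw, hwj⟩ := re_mem_Ioo_of_mem_openSegment (hz hij) hw
    rw [hwq.1] at hiw hwj
    have hiq := hz.lt_iff_lt.1 hiw
    have hqj := hz.lt_iff_lt.1 hwj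
    exact ⟨hiq, hqj, (openSegment_inter_cutRay_true_nonempty_iff (hz hiq) (hz hqj)).1 h⟩
  · rintro ⟨hiq, hqj, h⟩
    exact (openSegment_inter_cutRay_true_nonempty_iff (hz hiq) (hz hqj)).2 h

theorem visible_const_true_iff {d : ℕ} {z : Fin d → ℂ} (hz : StrictMono fun i => (z i).re)
    {i j : Fin d} (hij : i < j) :
    Visible d z (fun _ => true) i j ↔ ∀ q, i < q → q < j →
      (z i).im * ((z j).re - (z q).re) + (z j).im * ((z q).re - (z i).re) ≤
        (z q).im * ((z j).re - (z i).re) := by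
  simp only [Visible, cutSet, inter_iUnion₂, ← not_nonempty_iff_eq_empty, nonempty_iUnion,
    openSegment_inter_cutRay_true_nonempty_iff_of_strictMono hz hij, mem_ofPred_eq, not_exists,
    not_and, not_lt]
  constructor
  · intro h q hiq hqj
    exact h q ⟨by omega, by omega⟩ hiq hqj
  · intro h q _ hiq hqj
    exact h q hiq hqj

def ChordVisible (y : ℕ → ℝ) (i j : ℕ) : Prop :=
  ∀ q, i < q → q < j → y i * (j - q) + y j * (q - i) ≤ y q * (j - i)

def heightPoints (d : ℕ) (y : ℕ → ℝ) : Fin d → ℂ := fun a => ⟨a, y a⟩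

theorem strictMono_re_heightPoints (d : ℕ) (y : ℕ → ℝ) :
    StrictMono fun i => (heightPoints d y i).re :=
  fun _ _ h => by simpa [heightPoints] using h

theorem visible_heightPoints_iff {d : ℕ} {y : ℕ → ℝ} {i j : Fin d} (hij : i < j) :
    Visible d (heightPoints d y) (fun _ => true) i j ↔ ChordVisible y i j := by
  rw [visible_const_true_iff (strictMono_re_heightPoints d y) hij]
  constructor
  · intro h q hiq hqj
    exact h ⟨q, by omega⟩ hiq hqj
  · intro h q hiq hqj
    exact h q hiq hqj

noncomputable instance (y : ℕ → ℝ) (i j : ℕ) : Decidable (ChordVisible y i j) :=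
  Classical.dec _

noncomputable def chordCount (y : ℕ → ℝ) (d : ℕ) : ℕ :=
  ∑ j ∈ Finset.range d, #{i ∈ Finset.range j | ChordVisible y i j}

theorem chordCount_succ (y : ℕ → ℝ) (n : ℕ) :
    chordCount y (n + 1) = chordCount y n + #{i ∈ Finset.range n | ChordVisible y i n} :=
  Finset.sum_range_succ _ _

theorem chordVisible_succ (y : ℕ → ℝ) (i : ℕ) : ChordVisible y i (i + 1) :=
  fun q hiq hqj => absurd hqj (by omega)

theorem card_fin_lt_pairs_eq_sum_range (d : ℕ) (R : ℕ → ℕ → Prop)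
    [∀ i j, Decidable (R i j)] :
    Nat.card {p : Fin d × Fin d // p.1 < p.2 ∧ R p.1 p.2} =
      ∑ j ∈ Finset.range d, #{i ∈ Finset.range j | R i j} := by
  rw [Nat.card_eq_fintype_card, Fintype.card_subtype, Finset.card_filter,
    Fintype.sum_prod_type_right, ← Fin.sum_univ_eq_sum_range]
  refine Finset.sum_congr rfl fun j _ => ?_
  simp only [Fin.lt_def]
  rw [Fin.sum_univ_eq_sum_range (fun i => if i < j ∧ R i j then 1 else 0), ← Finset.card_filter]
  congr 1
  ext i
  simp only [Finset.mem_filter, Finset.mem_range]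
  exact ⟨fun h => h.2, fun h => ⟨h.1.trans j.isLt, h⟩⟩

theorem visibleCount_heightPoints (d : ℕ) (y : ℕ → ℝ) :
    visibleCount d (heightPoints d y) (fun _ => true) = chordCount y d := by
  rw [visibleCount, chordCount, ← card_fin_lt_pairs_eq_sum_range]
  exact Nat.card_congr (Equiv.subtypeEquivRight fun p =>
    and_congr_right fun h => visible_heightPoints_iff h)

theorem choose_two_succ (n : ℕ) : (n + 1).choose 2 = n.choose 2 + n := by
  rw [Nat.choose_succ_succ', Nat.choose_one_right, add_comm]

theorem exists_eq_choose_two_add {N T : ℕ} (hT : T ≤ (N + 1).choose 2) :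
    ∃ n ≤ N, ∃ e ≤ n, T = n.choose 2 + e := by
  induction N generalizing T with
  | zero => exact ⟨0, le_rfl, 0, le_rfl, by simpa using hT⟩
  | succ N ih =>
    rw [choose_two_succ] at hT
    rcases le_or_gt T ((N + 1).choose 2) with h | h
    · obtain ⟨n, hn, e, he, rfl⟩ := ih h
      exact ⟨n, hn.trans N.le_succ, e, he, rfl⟩
    · exact ⟨N + 1, le_rfl, T - (N + 1).choose 2, by omega, by omega⟩

/-- The offset `3 / 2` places node `m` so that it sees exactly the nodes `0, …, c - 2` and
`m - 1`, and makes the heights from `m` on half-integers, hence distinct from the integer heights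
before `m`. -/
noncomputable def stripHeight (m c : ℕ) (i : ℕ) : ℝ :=
  if i < m then -(i : ℝ) ^ 2 else -(m : ℝ) ^ 2 + (m - c + 3 / 2) + ((i : ℝ) - m) ^ 2

section stripHeight

variable {m c i j : ℕ}

theorem stripHeight_of_lt (h : i < m) : stripHeight m c i = -(i : ℝ) ^ 2 := if_pos h

theorem stripHeight_of_le (h : m ≤ i) :
    stripHeight m c i = -(m : ℝ) ^ 2 + (m - c + 3 / 2) + ((i : ℝ) - m) ^ 2 :=
  if_neg h.not_gt

theorem chordVisible_stripHeight_of_lt (hj : j < m) : ChordVisible (stripHeight m c) i j := by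
  intro q hiq hqj
  rw [stripHeight_of_lt (by omega), stripHeight_of_lt (by omega), stripHeight_of_lt (by omega)]
  have hiq' : (i : ℝ) < q := by exact_mod_cast hiq
  have hqj' : (q : ℝ) < j := by exact_mod_cast hqj
  nlinarith [mul_pos (mul_pos (sub_pos.2 hiq') (sub_pos.2 hqj')) (sub_pos.2 (hiq'.trans hqj'))]

theorem chordVisible_stripHeight_self (hic : i + 1 < c) (hcm : c ≤ m) :
    ChordVisible (stripHeight m c) i m := by
  intro q hiq hqm
  rw [stripHeight_of_lt (by omega), stripHeight_of_lt hqm, stripHeight_of_le le_rfl]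
  have hiq' : (i : ℝ) + 1 ≤ q := by exact_mod_cast hiq
  have hqm' : (q : ℝ) + 1 ≤ m := by exact_mod_cast hqm
  have hic' : (i : ℝ) + 2 ≤ c := by exact_mod_cast hic
  have hA : (m : ℝ) - c + 3 / 2 < (m - i) * (m - q) := by nlinarith
  nlinarith [mul_pos (sub_pos.2 (show (i : ℝ) < q by linarith)) (sub_pos.2 hA)]

theorem not_chordVisible_stripHeight_self (hci : c ≤ i + 1) (him : i + 1 < m) :
    ¬ ChordVisible (stripHeight m c) i m := by
  obtain ⟨n, rfl⟩ : ∃ n, m = n + 1 := ⟨m - 1, by omega⟩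
  intro h
  have hn := h n (by omega) (by omega)
  rw [stripHeight_of_lt (i := i) (by omega), stripHeight_of_lt (i := n) (by omega),
    stripHeight_of_le le_rfl] at hn
  push_cast at hn
  have hin : (i : ℝ) < n := by exact_mod_cast (by omega : i < n)
  have hci' : (c : ℝ) ≤ i + 1 := by exact_mod_cast hci
  nlinarith [mul_pos (sub_pos.2 hin) (show (0 : ℝ) < i - c + 3 / 2 by linarith)]

theorem not_chordVisible_stripHeight_of_lt_of_lt (hc : 1 ≤ c) (him : i < m) (hmj : m < j) :
    ¬ ChordVisible (stripHeight m c) i j := by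
  intro h
  have hm := h m him hmj
  rw [stripHeight_of_lt him, stripHeight_of_le le_rfl, stripHeight_of_le hmj.le] at hm
  have him' : (i : ℝ) + 1 ≤ m := by exact_mod_cast him
  have hmj' : (m : ℝ) + 1 ≤ j := by exact_mod_cast hmj
  have hc' : (1 : ℝ) ≤ c := by exact_mod_cast hc
  have hi0 : (0 : ℝ) ≤ i := i.cast_nonneg
  have hB : 0 < (m : ℝ) ^ 2 - i ^ 2 - (m - c + 3 / 2) + (j - m) * (m - i) := by nlinarith
  nlinarith [mul_pos (show (0 : ℝ) < j - m by linarith) hB]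

theorem not_chordVisible_stripHeight_of_le (hmi : m ≤ i) (hij : i + 1 < j) :
    ¬ ChordVisible (stripHeight m c) i j := by
  intro h
  have hq := h (i + 1) (by omega) hij
  rw [stripHeight_of_le hmi, stripHeight_of_le (by omega), stripHeight_of_le (by omega)] at hq
  push_cast at hq
  have hij' : (i : ℝ) + 1 < j := by exact_mod_cast hij
  nlinarith [mul_pos (show (0 : ℝ) < j - i by linarith) (sub_pos.2 hij')]

theorem chordVisible_stripHeight_iff (hc : 1 ≤ c) (hcm : c ≤ m) (hij : i < j) :
    ChordVisible (stripHeight m c) i j ↔ j < m ∨ (j = m ∧ i + 1 < c) ∨ j = i + 1 := by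
  constructor
  · intro h
    by_contra! hne
    obtain ⟨hjm, hjc, hji⟩ := hne
    rcases hjm.eq_or_lt with rfl | hmj
    · exact not_chordVisible_stripHeight_self (hjc rfl) (by omega) h
    · rcases lt_or_ge i m with him | hmi
      · exact not_chordVisible_stripHeight_of_lt_of_lt hc him hmj h
      · exact not_chordVisible_stripHeight_of_le hmi (by omega) h
  · rintro (hjm | ⟨rfl, hic⟩ | rfl)
    · exact chordVisible_stripHeight_of_lt hjm
    · exact chordVisible_stripHeight_self hic hcm
    · exact chordVisible_succ _ i

theorem stripHeight_injective : Function.Injective (stripHeight m c) := by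
  intro a b hab
  wlog hlt : a < b generalizing a b
  · rcases (not_lt.1 hlt).eq_or_lt with h | h
    · exact h.symm
    · exact (this hab.symm h).symm
  exfalso
  have hlt' : (a : ℝ) < b := by exact_mod_cast hlt
  rcases lt_or_ge b m with hbm | hmb
  · rw [stripHeight_of_lt (hlt.trans hbm), stripHeight_of_lt hbm] at hab
    nlinarith [a.cast_nonneg (α := ℝ)]
  rcases lt_or_ge a m with ham | hma
  · rw [stripHeight_of_lt ham, stripHeight_of_le hmb] at hab
    -- an integer cannot equal a half-integer
    have h2 : (2 * (m : ℤ) ^ 2 - 2 * a ^ 2 - 2 * m + 2 * c - 2 * (b - m) ^ 2 : ℤ) = 3 := by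
      have : (2 * (m : ℝ) ^ 2 - 2 * a ^ 2 - 2 * m + 2 * c - 2 * (b - m) ^ 2) = 3 := by linarith
      exact_mod_cast this
    omega
  · rw [stripHeight_of_le hma, stripHeight_of_le hmb] at hab
    have hma' : (m : ℝ) ≤ a := by exact_mod_cast hma
    nlinarith

theorem chordCount_stripHeight_of_le {n : ℕ} (hn : n ≤ m) :
    chordCount (stripHeight m c) n = n.choose 2 := by
  induction n with
  | zero => rfl
  | succ n ih =>
    rw [chordCount_succ, ih (by omega), Finset.filter_true_of_mem fun i hi =>
      chordVisible_stripHeight_of_lt (by omega), Finset.card_range, choose_two_succ]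

theorem chordCount_stripHeight (hc : 1 ≤ c) (hcm : c ≤ m) {d : ℕ} (hmd : m < d) :
    chordCount (stripHeight m c) d = m.choose 2 + c + (d - 1 - m) := by
  induction d, hmd using Nat.le_induction with
  | base =>
    have hfiber : {i ∈ Finset.range m | ChordVisible (stripHeight m c) i m} =
        insert (m - 1) (Finset.range (c - 1)) := by
      rw [Finset.filter_congr fun i hi =>
        chordVisible_stripHeight_iff hc hcm (Finset.mem_range.1 hi)]
      ext i
      simp only [Finset.mem_filter, Finset.mem_range, Finset.mem_insert, true_and]
      omega
    rw [chordCount_succ, chordCount_stripHeight_of_le le_rfl, hfiber,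
      Finset.card_insert_of_notMem (by simp only [Finset.mem_range]; omega), Finset.card_range]
    omega
  | succ n hmn ih =>
    have hfiber : {i ∈ Finset.range n | ChordVisible (stripHeight m c) i n} = {n - 1} := by
      rw [Finset.filter_congr fun i hi =>
        chordVisible_stripHeight_iff hc hcm (Finset.mem_range.1 hi)]
      ext i
      simp only [Finset.mem_filter, Finset.mem_range, Finset.mem_singleton]
      omega
    rw [chordCount_succ, ih, hfiber, Finset.card_singleton]
    omega

end stripHeight

/-- For every `d ≥ 2` and every `k` with `d - 1 ≤ k ≤ d(d-1)/2` there is a chopped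
vertical strip on `d` nodes with exactly `k` visible pairs. -/
theorem stmt0 (d k : ℕ) (hd : 2 ≤ d) (hk1 : d - 1 ≤ k) (hk2 : k ≤ d * (d - 1) / 2) :
    ∃ (z : Fin d → ℂ) (dir : Fin d → Bool),
      StrictMono (fun i => (z i).re) ∧
      Function.Injective (fun i => (z i).im) ∧
      visibleCount d z dir = k := by
  obtain ⟨N, rfl⟩ : ∃ N, d = N + 2 := ⟨d - 2, by omega⟩
  rw [← Nat.choose_two_right, choose_two_succ] at hk2
  obtain ⟨n, hnN, e, hen, hT⟩ := exists_eq_choose_two_add (N := N) (T := k - (N + 1)) (by omega)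
  refine ⟨heightPoints (N + 2) (stripHeight (n + 1) (e + 1)), fun _ => true,
    strictMono_re_heightPoints _ _, fun a b hab => Fin.ext (stripHeight_injective hab), ?_⟩
  rw [visibleCount_heightPoints,
    chordCount_stripHeight (m := n + 1) (c := e + 1) (by omega) (by omega) (by omega),
    choose_two_succ]
  omega
end

section
/- In any chopped vertical strip on d nodes, the number of visible pairs is at least d−1; equivalently, the visibility graph (vertices z₁,...,z_d, edges the visible pairs) is connected, hence has at least d−1 edges. -/
open Complex Set

/-!
Every cut is a vertical ray, so it lies on the vertical line through its node. The open segment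
joining two nodes that are consecutive in the order of real parts lies strictly between the
vertical lines through them, where no other node, hence no cut, lives. So consecutive nodes
see each other: the visibility graph contains the path `z₁ z₂ ⋯ z_d`, and these `d - 1` pairs
are visible.
-/

lemma Fin.castSucc_covBy_succ {n : ℕ} (i : Fin n) : i.castSucc ⋖ i.succ :=
  Fin.covBy_iff.2 (Order.covBy_add_one (i : ℕ))

lemma re_mem_Ioo_of_mem_openSegment_s1 {x y w : ℂ} (hxy : x.re < y.re)
    (hw : w ∈ openSegment ℝ x y) : w.re ∈ Ioo x.re y.re := by
  rw [← openSegment_eq_Ioo hxy]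
  have := mem_image_of_mem Complex.reLm.toAffineMap hw
  rwa [image_openSegment] at this

lemma re_eq_of_mem_cutRay {p w : ℂ} {b : Bool} (hw : w ∈ cutRay p b) : w.re = p.re := by
  obtain ⟨t, -, rfl⟩ := hw
  cases b <;> simp

lemma visible_of_covBy {d : ℕ} {z : Fin d → ℂ} (dir : Fin d → Bool)
    (hre : StrictMono fun i => (z i).re) {i j : Fin d} (hij : i ⋖ j) : Visible d z dir i j := by
  refine eq_empty_iff_forall_notMem.2 fun w ⟨hseg, hcut⟩ => ?_
  simp only [cutSet, mem_iUnion] at hcut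
  obtain ⟨k, -, hk⟩ := hcut
  obtain ⟨hik, hkj⟩ := re_mem_Ioo_of_mem_openSegment_s1 (hre hij.lt) hseg
  rw [re_eq_of_mem_cutRay hk] at hik hkj
  exact hij.2 (hre.lt_iff_lt.1 hik) (hre.lt_iff_lt.1 hkj)

lemma pathGraph_le_fromRel_visible {d : ℕ} {z : Fin d → ℂ} (dir : Fin d → Bool)
    (hre : StrictMono fun i => (z i).re) :
    SimpleGraph.pathGraph d ≤ SimpleGraph.fromRel (Visible d z dir) := by
  intro u v huv
  rw [SimpleGraph.pathGraph, SimpleGraph.hasse_adj] at huv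
  refine ⟨huv.elim (·.lt.ne) (·.lt.ne'), ?_⟩
  exact huv.imp (visible_of_covBy dir hre) (visible_of_covBy dir hre)

theorem stmt1_general (d : ℕ) (hd : 1 ≤ d) (z : Fin d → ℂ) (dir : Fin d → Bool)
    (hre : StrictMono fun i => (z i).re) :
    (SimpleGraph.fromRel (Visible d z dir)).Connected ∧
    d - 1 ≤ Nat.card {p : Fin d × Fin d // p.1 < p.2 ∧ Visible d z dir p.1 p.2} := by
  obtain ⟨n, rfl⟩ := Nat.exists_eq_add_of_le' hd
  refine ⟨(SimpleGraph.pathGraph_connected n).mono (pathGraph_le_fromRel_visible dir hre), ?_⟩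
  let consecutive (i : Fin n) :
      {p : Fin (n + 1) × Fin (n + 1) // p.1 < p.2 ∧ Visible (n + 1) z dir p.1 p.2} :=
    ⟨(i.castSucc, i.succ), Fin.castSucc_lt_succ, visible_of_covBy dir hre i.castSucc_covBy_succ⟩
  have hinj : Function.Injective consecutive := fun i j hij =>
    Fin.castSucc_injective n (congrArg (·.1.1) hij)
  simpa using Nat.card_le_card_of_injective consecutive hinj

/-- The visibility graph of a chopped vertical strip is connected, hence the number of
visible pairs is at least `d - 1`. -/
theorem stmt1 (d : ℕ) (hd : 1 ≤ d) (z : Fin d → ℂ) (dir : Fin d → Bool)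
    (hre : StrictMono fun i => (z i).re)
    (him : Function.Injective fun i => (z i).im) :
    (SimpleGraph.fromRel (Visible d z dir)).Connected ∧
    d - 1 ≤ Nat.card {p : Fin d × Fin d // p.1 < p.2 ∧ Visible d z dir p.1 p.2} :=
  stmt1_general d hd z dir hre
end

section
/- Consider points z₁,...,z_d with strictly increasing real parts and cuts as in a chopped vertical strip realizing exactly k visible pairs among z₁,...,z_{d-1} (treating z₁,...,z_{d-1} with their cuts as a chopped strip on d−1 nodes). Then one can add a cut at z_{d-1} and place a new node z_d to the right of z_{d-1} so that the resulting chopped strip on d nodes has exactly k+1 visible pairs: the only new visible pair is (d−1, d). -/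
open Complex Set

/-!
The old last node `z (d-1)` becomes interior, so the ray `cutRay (z (d-1)) (dir (d-1))`, which
was ignored so far, becomes a cut; the new direction `b` sits at the new last node and never
matters. Put the new node one unit to the right of `z (d-1)` and far out in the direction of
that ray. A segment from an earlier node `z i` crosses the line `re = (z (d-1)).re` far out
along the ray, so it is blocked. The segment from `z (d-1)` lies strictly to the right of every
cut, and segments between old nodes lie strictly to the left of the new ray, so their
visibility is unchanged.
-/

open Filter

lemma Fin.strictMono_snoc {α : Type*} [Preorder α] {n : ℕ} {f : Fin n → α} {a : α}
    (hf : StrictMono f) (ha : ∀ i, f i < a) : StrictMono (Fin.snoc f a : Fin (n + 1) → α) := by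
  intro i j hij
  induction j using Fin.lastCases with
  | last =>
    induction i using Fin.lastCases with
    | last => exact absurd hij (lt_irrefl _)
    | cast i => simpa using ha i
  | cast j =>
    induction i using Fin.lastCases with
    | last => exact absurd hij (not_lt.2 (Fin.le_last _))
    | cast i => simpa using hf (Fin.castSucc_lt_castSucc_iff.1 hij)

lemma card_pairs_fin_succ {n : ℕ} (W : Fin (n + 1) → Fin (n + 1) → Prop) :
    Nat.card {p : Fin (n + 1) × Fin (n + 1) // p.1 < p.2 ∧ W p.1 p.2} =
      Nat.card {p : Fin n × Fin n // p.1 < p.2 ∧ W p.1.castSucc p.2.castSucc} +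
        Nat.card {i : Fin n // W i.castSucc (Fin.last n)} := by
  classical
  simp only [Nat.card_eq_fintype_card, Fintype.card_subtype, Finset.card_filter,
    Fintype.sum_prod_type, Fin.sum_univ_castSucc]
  simp [Finset.sum_add_distrib, Fin.castSucc_lt_last, not_lt.2 (Fin.le_last _)]

lemma re_mem_Ioo_of_mem_openSegment_s5 {u v p : ℂ} (huv : u.re < v.re)
    (hp : p ∈ openSegment ℝ u v) : p.re ∈ Ioo u.re v.re := by
  rw [← openSegment_eq_Ioo (𝕜 := ℝ) huv]
  exact image_openSegment ℝ Complex.reLm.toAffineMap u v ▸ mem_image_of_mem _ hp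

lemma mem_cutRay_iff {p q : ℂ} {b : Bool} :
    q ∈ cutRay p b ↔ q.re = p.re ∧ if b then p.im < q.im else q.im < p.im := by
  constructor
  · rintro ⟨t, ht, rfl⟩
    cases b <;> simp [ht]
  · rintro ⟨hre, him⟩
    cases b
    · refine ⟨p.im - q.im, by simpa using him, Complex.ext ?_ ?_⟩ <;> simp [hre]
    · refine ⟨q.im - p.im, by simpa using him, Complex.ext ?_ ?_⟩ <;> simp [hre]

lemma re_le_of_mem_cutSet {d : ℕ} {z : Fin d → ℂ} {dir : Fin d → Bool} {x : ℝ}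
    (hz : ∀ j, (z j).re ≤ x) {q : ℂ} (hq : q ∈ cutSet d z dir) : q.re ≤ x := by
  simp only [cutSet, mem_iUnion] at hq
  obtain ⟨j, -, hj⟩ := hq
  exact (mem_cutRay_iff.1 hj).1 ▸ hz j

lemma cutSet_snoc {d : ℕ} (hd : 2 ≤ d) (z : Fin d → ℂ) (dir : Fin d → Bool) (w : ℂ)
    (b : Bool) :
    cutSet (d + 1) (Fin.snoc z w) (Fin.snoc dir b) =
      cutSet d z dir ∪ cutRay (z ⟨d - 1, by omega⟩) (dir ⟨d - 1, by omega⟩) := by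
  ext q
  simp only [cutSet, mem_iUnion, mem_union, Set.mem_ofPred_eq, exists_prop]
  constructor
  · rintro ⟨j, ⟨hj0, hjd⟩, hq⟩
    induction j using Fin.lastCases with
    | last => simp at hjd
    | cast j =>
      simp only [Fin.snoc_castSucc, Fin.val_castSucc] at hq hj0 hjd
      by_cases hj : (j : ℕ) = d - 1
      · exact Or.inr (by rwa [show j = ⟨d - 1, by omega⟩ from Fin.ext hj] at hq)
      · exact Or.inl ⟨j, ⟨hj0, hj⟩, hq⟩
  · rintro (⟨j, ⟨hj0, hjd⟩, hq⟩ | hq)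
    · exact ⟨j.castSucc, ⟨hj0, by simp; omega⟩, by simpa using hq⟩
    · exact ⟨Fin.castSucc ⟨d - 1, by omega⟩, ⟨by simp; omega, by simp; omega⟩,
        by simp only [Fin.snoc_castSucc]; exact hq⟩

def beyondCut (p : ℂ) (b : Bool) (T : ℝ) : ℂ :=
  ⟨p.re + 1, if b then p.im + T else p.im - T⟩

lemma eventually_openSegment_inter_cutRay_nonempty {u p : ℂ} (hu : u.re < p.re) (b : Bool) :
    ∀ᶠ T in atTop, (openSegment ℝ u (beyondCut p b T) ∩ cutRay p b).Nonempty := by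
  -- the segment crosses the line `re = p.re` at parameter `θ`, independent of `T`
  set θ := (p.re - u.re) / (p.re + 1 - u.re)
  have hθ : θ * (p.re + 1 - u.re) = p.re - u.re := div_mul_cancel₀ _ (by linarith)
  have hθ0 : 0 < θ := div_pos (by linarith) (by linarith)
  have hθ1 : θ < 1 := (div_lt_one (by linarith)).2 (by linarith)
  filter_upwards [eventually_gt_atTop ((1 - θ) * |u.im - p.im| / θ)] with T hT
  rw [div_lt_iff₀' hθ0] at hT
  refine ⟨(1 - θ) • u + θ • beyondCut p b T,
    ⟨1 - θ, θ, by linarith, hθ0, by ring, rfl⟩, ?_⟩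
  rw [mem_cutRay_iff]
  simp only [beyondCut, Complex.add_re, Complex.add_im, Complex.real_smul, Complex.mul_re,
    Complex.mul_im, Complex.ofReal_re, Complex.ofReal_im, zero_mul, sub_zero, add_zero]
  refine ⟨by linarith, ?_⟩
  cases b <;> simp only [Bool.false_eq_true, if_true, if_false] <;>
    nlinarith [neg_abs_le (u.im - p.im), le_abs_self (u.im - p.im)]

lemma eventually_beyondCut_im_ne (p : ℂ) (b : Bool) (c : ℝ) :
    ∀ᶠ T in atTop, (beyondCut p b T).im ≠ c := by
  filter_upwards [eventually_gt_atTop |c - p.im|] with T hT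
  cases b <;> simp only [beyondCut, Bool.false_eq_true, if_true, if_false] <;>
    intro h <;> linarith [neg_abs_le (c - p.im), le_abs_self (c - p.im)]

section snoc

variable {d : ℕ} {z : Fin d → ℂ} {dir : Fin d → Bool} {w : ℂ} {b : Bool}

lemma visible_snoc_castSucc_iff (hd : 2 ≤ d) (hre : StrictMono fun i => (z i).re)
    {i j : Fin d} (hij : i < j) :
    Visible (d + 1) (Fin.snoc z w) (Fin.snoc dir b) i.castSucc j.castSucc ↔
      Visible d z dir i j := by
  have hseg : Disjoint (openSegment ℝ (z i) (z j))
      (cutRay (z ⟨d - 1, by omega⟩) (dir ⟨d - 1, by omega⟩)) := by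
    refine disjoint_left.2 fun q hq hcut => ?_
    have hq := (re_mem_Ioo_of_mem_openSegment_s5 (hre hij) hq).2
    have hj := hre.monotone (show j ≤ ⟨d - 1, by omega⟩ from Fin.le_def.2 (by simp; omega))
    have := (mem_cutRay_iff.1 hcut).1
    linarith
  simp only [Visible, ← disjoint_iff_inter_eq_empty, Fin.snoc_castSucc, cutSet_snoc hd,
    disjoint_union_right, hseg, and_true]

lemma visible_snoc_last (hd : 2 ≤ d) (hle : ∀ j, (z j).re ≤ (z ⟨d - 1, by omega⟩).re)
    (hw : (z ⟨d - 1, by omega⟩).re < w.re) :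
    Visible (d + 1) (Fin.snoc z w) (Fin.snoc dir b) (Fin.castSucc ⟨d - 1, by omega⟩)
      (Fin.last d) := by
  refine eq_empty_iff_forall_notMem.2 fun q ⟨hq, hcut⟩ => ?_
  rw [Fin.snoc_castSucc, Fin.snoc_last] at hq
  rw [cutSet_snoc hd] at hcut
  have hq := (re_mem_Ioo_of_mem_openSegment_s5 hw hq).1
  rcases hcut with hcut | hcut
  · linarith [re_le_of_mem_cutSet hle hcut]
  · linarith [(mem_cutRay_iff.1 hcut).1]

lemma not_visible_snoc_last (hd : 2 ≤ d) {i : Fin d}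
    (hi : (openSegment ℝ (z i) w ∩
      cutRay (z ⟨d - 1, by omega⟩) (dir ⟨d - 1, by omega⟩)).Nonempty) :
    ¬ Visible (d + 1) (Fin.snoc z w) (Fin.snoc dir b) i.castSucc (Fin.last d) := by
  rw [Visible, Fin.snoc_castSucc, Fin.snoc_last, cutSet_snoc hd]
  exact (hi.mono (inter_subset_inter_right _ subset_union_right)).ne_empty

end snoc

/-- Inductive step: a chopped vertical strip on `d` nodes with exactly `k` visible
pairs can be extended — by adding a cut (up or down) at the old last node and placing
a new node to its right — to a chopped strip on `d + 1` nodes with exactly `k + 1`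
visible pairs, the only new visible pair being the last two nodes. -/
theorem stmt5 (d : ℕ) (hd : 2 ≤ d) (k : ℕ) (z : Fin d → ℂ) (dir : Fin d → Bool)
    (hre : StrictMono fun i => (z i).re)
    (him : Function.Injective fun i => (z i).im)
    (hk : Nat.card {p : Fin d × Fin d // p.1 < p.2 ∧ Visible d z dir p.1 p.2} = k) :
    ∃ (w : ℂ) (b : Bool),
      (z ⟨d - 1, by omega⟩).re < w.re ∧
      StrictMono (fun i => ((Fin.snoc z w : Fin (d + 1) → ℂ) i).re) ∧
      Function.Injective (fun i => ((Fin.snoc z w : Fin (d + 1) → ℂ) i).im) ∧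
      (∀ i : Fin (d + 1), (i : ℕ) + 2 ≤ d →
        ¬ Visible (d + 1) (Fin.snoc z w) (Fin.snoc dir b) i (Fin.last d)) ∧
      Visible (d + 1) (Fin.snoc z w) (Fin.snoc dir b) ⟨d - 1, by omega⟩ (Fin.last d) ∧
      Nat.card {p : Fin (d + 1) × Fin (d + 1) //
          p.1 < p.2 ∧ Visible (d + 1) (Fin.snoc z w) (Fin.snoc dir b) p.1 p.2} =
        k + 1 := by
  set m : Fin d := ⟨d - 1, by omega⟩
  have hle : ∀ i, (z i).re ≤ (z m).re :=
    fun i => hre.monotone (Fin.le_def.2 (by simp [m]; omega))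
  obtain ⟨T, hhidden, hfresh⟩ := ((eventually_all.2 fun i : {i : Fin d // i < m} =>
      eventually_openSegment_inter_cutRay_nonempty (hre i.2) (dir m)).and
    (eventually_all.2 fun i => eventually_beyondCut_im_ne (z m) (dir m) (z i).im)).exists
  set w := beyondCut (z m) (dir m) T
  have hw : (z m).re < w.re := by simp [w, beyondCut]
  have hnot : ∀ i : Fin d, i < m →
      ¬ Visible (d + 1) (Fin.snoc z w) (Fin.snoc dir true) i.castSucc (Fin.last d) :=
    fun i hi => not_visible_snoc_last hd (hhidden ⟨i, hi⟩)
  have hlast : Visible (d + 1) (Fin.snoc z w) (Fin.snoc dir true) m.castSucc (Fin.last d) :=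
    visible_snoc_last hd hle hw
  refine ⟨w, true, hw, ?_, ?_, fun i hi => ?_, hlast, ?_⟩
  · rw [← Function.comp_def, Fin.comp_snoc]
    exact Fin.strictMono_snoc hre fun i => (hle i).trans_lt hw
  · rw [← Function.comp_def, Fin.comp_snoc]
    exact Fin.snoc_injective_iff.2 ⟨him, fun ⟨i, hi⟩ => hfresh i hi.symm⟩
  · obtain ⟨i, rfl⟩ : ∃ j : Fin d, j.castSucc = i := ⟨⟨i, by omega⟩, rfl⟩
    exact hnot i (Fin.lt_def.2 (by simp [m] at hi ⊢; omega))
  · have hold := Nat.card_congr (Equiv.subtypeEquivRight fun p : Fin d × Fin d =>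
      and_congr_right fun h : p.1 < p.2 =>
        visible_snoc_castSucc_iff (dir := dir) (w := w) (b := true) hd hre h)
    have hnew : Nat.card {i : Fin d // Visible (d + 1) (Fin.snoc z w) (Fin.snoc dir true)
        i.castSucc (Fin.last d)} = 1 :=
      Nat.card_eq_one_iff_exists.2 ⟨⟨m, hlast⟩, fun ⟨i, hi⟩ => Subtype.ext <|
        (le_of_not_gt fun h => hnot i h hi).antisymm' (Fin.le_def.2 (by simp [m]; omega))⟩
    rw [card_pairs_fin_succ, hold, hnew, hk]
end
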